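/- The objective function of the sensor placement problem is not monotone: there exists a graph and a flow vector such that adding a sensor strictly increases the prediction error. Concretely, for a directed 3-cycle (triangle) with flow f having f_e = c ≠ 0 on one edge e and 0 on the other two, the regularized conservation-based prediction with no sensors has squared error c² (in the limit λ → 0 the prediction is 0 on all edges), while after labeling edge e the prediction assigns flow c to all three edges, yielding squared error 2c² on the unlabeled edges. -/

import Mathlib

open Matrix Finset

/-- Non-monotonicity of the sensor placement objective on a directed triangle.
For the directed 3-cycle with true flow `c ≠ 0` on edge `0` and `0` elsewhere:
the zero flow minimizes the total squared divergence (no-sensor prediction, λ → 0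
min-norm limit) with squared error `c²`; after labeling edge `0`, the constant flow
`c` is the unique divergence minimizer consistent with the label, and its squared
error on the unlabeled edges is `2c² > c²`. -/
theorem sensor_placement_not_monotone (c : ℝ) (hc : c ≠ 0)
    (B : Matrix (Fin 3) (Fin 3) ℝ)
    (hB : ∀ i j, B i j = if i = j + 1 then 1 else if i = j then -1 else 0)
    (f : Fin 3 → ℝ) (hf : f = fun j => if j = 0 then c else 0) :
    -- with no sensors, the zero prediction minimizes the squared divergence ...
    (∀ g : Fin 3 → ℝ, ∑ i, (B.mulVec (0 : Fin 3 → ℝ) i) ^ 2 ≤ ∑ i, (B.mulVec g i) ^ 2) ∧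
    -- ... and its squared error is c²
    (∑ j, (f j - (0 : Fin 3 → ℝ) j) ^ 2 = c ^ 2) ∧
    -- after labeling edge 0 with value c, the constant flow c minimizes the divergence ...
    (∀ g : Fin 3 → ℝ, g 0 = c →
        ∑ i, (B.mulVec (fun _ => c) i) ^ 2 ≤ ∑ i, (B.mulVec g i) ^ 2) ∧
    -- ... it is the unique such (zero-divergence) minimizer ...
    (∀ g : Fin 3 → ℝ, g 0 = c → (∑ i, (B.mulVec g i) ^ 2 = 0) → g = fun _ => c) ∧
    -- ... and the squared error on the unlabeled edges 1,2 is 2c², strictly larger than c²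
    ((f 1 - c) ^ 2 + (f 2 - c) ^ 2 = 2 * c ^ 2) ∧
    c ^ 2 < 2 * c ^ 2 := by
  have hBv : ∀ (g : Fin 3 → ℝ) i, B.mulVec g i = ∑ j, B i j * g j := fun g i => rfl
  have hM : ∀ (g : Fin 3 → ℝ),
      B.mulVec g 0 = g 2 - g 0 ∧ B.mulVec g 1 = g 0 - g 1 ∧ B.mulVec g 2 = g 1 - g 2 := by
    intro g
    refine ⟨?_, ?_, ?_⟩ <;>
      rw [hBv, Fin.sum_univ_three, hB, hB, hB] <;> simp [Fin.ext_iff] <;> ring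
  refine ⟨?_, ?_, ?_, ?_, ?_, ?_⟩
  · intro g
    obtain ⟨h0, h1, h2⟩ := hM (0 : Fin 3 → ℝ)
    simp [Fin.sum_univ_three, h0, h1, h2]
    positivity
  · simp [hf, Fin.sum_univ_three]
  · intro g hg
    obtain ⟨h0, h1, h2⟩ := hM (fun _ => c)
    simp [Fin.sum_univ_three, h0, h1, h2]
    positivity
  · intro g hg hsum
    obtain ⟨h0, h1, h2⟩ := hM g
    rw [Fin.sum_univ_three, h0, h1, h2] at hsum
    have e0 : g 2 - g 0 = 0 := by nlinarith [sq_nonneg (g 2 - g 0), sq_nonneg (g 0 - g 1), sq_nonneg (g 1 - g 2)]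
    have e1 : g 0 - g 1 = 0 := by nlinarith [sq_nonneg (g 2 - g 0), sq_nonneg (g 0 - g 1), sq_nonneg (g 1 - g 2)]
    funext j
    fin_cases j <;> simp_all <;> linarith
  · simp [hf]; ring
  · nlinarith [sq_nonneg c, sq_abs c, abs_pos.mpr hc]
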